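/- Let T_n = n·n^(1/n) for integers n ≥ 1 and let σ_n = ⌊T_n⌋ − n + 1. If n ≥ 3 then 2 ≤ σ_n < n and the segment σ_{n−σ_n}, σ_{n−σ_n+1}, …, σ_n takes at most two values; equivalently, σ_n − σ_{n−σ_n} ≤ 1. -/
import Mathlib

open Real
set_option maxHeartbeats 1000000

noncomputable def T (n : ℕ) : ℝ := (n : ℝ) * (n : ℝ) ^ (1 / (n : ℝ))

noncomputable def σ (n : ℕ) : ℤ := ⌊T n⌋ - n + 1

lemma T_nonneg (n : ℕ) : 0 ≤ T n := by rw [T]; positivity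

lemma T_pow (n : ℕ) (hn : 0 < n) : (T n)^n = (n:ℝ)^(n+1) := by
  have h0 : (0:ℝ) ≤ (n:ℝ) := n.cast_nonneg
  have hne : (n:ℝ) ≠ 0 := by positivity
  rw [T, mul_pow, ← Real.rpow_natCast ((n:ℝ)^(1/(n:ℝ))) n, ← Real.rpow_mul h0,
    one_div, inv_mul_cancel₀ hne, Real.rpow_one, pow_succ]

lemma nat_le_T (n q : ℕ) (hn : 0 < n) (h : q^n ≤ n^(n+1)) : (q:ℝ) ≤ T n := by
  have hq : (q:ℝ)^n ≤ (T n)^n := by rw [T_pow n hn]; exact_mod_cast h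
  exact le_of_pow_le_pow_left₀ hn.ne' (T_nonneg n) hq

lemma T_lt_nat (n q : ℕ) (hn : 0 < n) (h : n^(n+1) < q^n) : T n < q := by
  by_contra hc
  push_neg at hc
  have h1 : (q:ℝ)^n ≤ (T n)^n := pow_le_pow_left₀ (by positivity) hc n
  rw [T_pow n hn] at h1
  have h2 : ((n:ℝ))^(n+1) < (q:ℝ)^n := by exact_mod_cast h
  linarith

lemma floor_T_eq (n a : ℕ) (hn : 0 < n) (h1 : a^n ≤ n^(n+1)) (h2 : n^(n+1) < (a+1)^n) :
    ⌊T n⌋ = (a:ℤ) := by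
  rw [Int.floor_eq_iff]
  refine ⟨by push_cast; exact nat_le_T n a hn h1, ?_⟩
  push_cast
  have := T_lt_nat n (a+1) hn h2
  push_cast at this
  linarith

lemma case_helper (n a : ℕ) (h3 : 3 ≤ n) (ha1 : n + 1 ≤ a) (ha2 : a ≤ 2*n - 2)
    (h1 : a^n ≤ n^(n+1)) (h2 : n^(n+1) < (a+1)^n)
    (h4 : (n-2)^(2*n-a-1) ≤ (2*n-a-1)^(2*n-a-1+1)) :
    2 ≤ σ n ∧ σ n < (n : ℤ) ∧ σ n - σ (n - (σ n).toNat) ≤ 1 := by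
  have hn0 : 0 < n := by omega
  have hfl : ⌊T n⌋ = (a:ℤ) := floor_T_eq n a hn0 h1 h2
  have hσ : σ n = (a:ℤ) - n + 1 := by rw [σ, hfl]
  have htn : n - (σ n).toNat = 2*n - a - 1 := by omega
  have hm1 : 1 ≤ 2*n - a - 1 := by omega
  have hTm : ((n-2 : ℕ):ℝ) ≤ T (2*n-a-1) := nat_le_T _ _ (by omega) h4
  rw [Nat.cast_sub (by omega : 2 ≤ n)] at hTm
  have hfm : ((n:ℤ) - 2) ≤ ⌊T (2*n-a-1)⌋ := Int.le_floor.mpr (by push_cast; exact_mod_cast hTm)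
  refine ⟨by omega, by omega, ?_⟩
  rw [htn]
  have hσm : σ (2*n-a-1) = ⌊T (2*n-a-1)⌋ - (2*n-a-1 : ℕ) + 1 := rfl
  omega

lemma exp_35_lb : (33.1:ℝ) ≤ Real.exp 3.5 := by
  have he : (2.7182818283:ℝ) ≤ Real.exp 1 := (Real.exp_one_gt_d9).le
  have h7 : (2.7182818283:ℝ)^7 ≤ Real.exp 1 ^ 7 := pow_le_pow_left₀ (by norm_num) he 7
  have hx : Real.exp 1 ^ 7 = Real.exp 3.5 * Real.exp 3.5 := by
    rw [← Real.exp_add, Real.exp_one_pow]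
    norm_num
  nlinarith [Real.exp_pos (3.5:ℝ), h7, hx]

lemma exp_35_ub : Real.exp 3.5 ≤ (34:ℝ) := by
  have he : Real.exp 1 ≤ (2.7182818286:ℝ) := (Real.exp_one_lt_d9).le
  have h7 : Real.exp 1 ^ 7 ≤ (2.7182818286:ℝ)^7 := pow_le_pow_left₀ (Real.exp_pos 1).le he 7
  have hx : Real.exp 1 ^ 7 = Real.exp 3.5 * Real.exp 3.5 := by
    rw [← Real.exp_add, Real.exp_one_pow]
    norm_num
  nlinarith [Real.exp_pos (3.5:ℝ), h7, hx]

-- key growth fact: exp y ≥ 2y² + y for y ≥ 3.5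
lemma exp_growth {y : ℝ} (hy : 3.5 ≤ y) : 2*y^2 + y ≤ Real.exp y := by
  have h1 : Real.exp y = Real.exp 3.5 * Real.exp (y - 3.5) := by
    rw [← Real.exp_add]; ring_nf
  have h2 : (1 + (y-3.5)/2)^2 ≤ Real.exp (y - 3.5) := by
    have ha := Real.add_one_le_exp ((y-3.5)/2)
    have hpos : (0:ℝ) ≤ 1 + (y-3.5)/2 := by linarith
    have hsq : (Real.exp ((y-3.5)/2))^2 = Real.exp (y-3.5) := by
      rw [sq, ← Real.exp_add]; ring_nf
    calc (1 + (y-3.5)/2)^2 ≤ (Real.exp ((y-3.5)/2))^2 := by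
          apply pow_le_pow_left₀ hpos; linarith
      _ = Real.exp (y-3.5) := hsq
  have h3 := exp_35_lb
  nlinarith [sq_nonneg (y - 3.5), Real.exp_pos (y-3.5)]

lemma T_exp (k : ℕ) (hk : 0 < k) : T k = k * Real.exp (Real.log k / k) := by
  have h0 : (0:ℝ) < k := by exact_mod_cast hk
  rw [T, Real.rpow_def_of_pos h0, mul_one_div]

lemma tail_case (n : ℕ) (hn : 34 ≤ n) :
    2 ≤ σ n ∧ σ n < (n : ℤ) ∧ σ n - σ (n - (σ n).toNat) ≤ 1 := by
  have hnn : 0 < n := by omega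
  have hn0 : (0:ℝ) < n := by exact_mod_cast hnn
  have hn34 : (34:ℝ) ≤ n := by exact_mod_cast hn
  set L := Real.log n with hL
  have hexpL : Real.exp L = n := Real.exp_log hn0
  have hL35 : (3.5:ℝ) ≤ L := by
    rw [hL, Real.le_log_iff_exp_le hn0]
    linarith [exp_35_ub]
  have hL1 : (1:ℝ) ≤ L := by linarith
  have key : 2*L^2 + L ≤ n := by
    have := exp_growth hL35
    linarith [hexpL]
  have hLn : L < n := by nlinarith
  have hnL : (0:ℝ) < (n:ℝ) - L := by linarith
  have hTn : T n = n * Real.exp (L / n) := T_exp n hnn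
  have hmulL : (n:ℝ) * (L/n) = L := by field_simp
  -- step 1 : n + 1 ≤ T n
  have hstep1 : (n:ℝ) + 1 ≤ T n := by
    have h := Real.add_one_le_exp (L/n)
    have h2 : (n:ℝ) * (L/n + 1) ≤ n * Real.exp (L/n) :=
      mul_le_mul_of_nonneg_left h hn0.le
    rw [mul_add, hmulL, mul_one] at h2
    rw [hTn]; linarith
  have hfloor1 : (n:ℤ) + 1 ≤ ⌊T n⌋ := Int.le_floor.mpr (by push_cast; linarith)
  have hs2 : 2 ≤ σ n := by rw [σ]; omega
  -- T n upper bound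
  have hexp_ub : Real.exp (L/n) ≤ n/(n-L) := by
    have h := Real.add_one_le_exp (-(L/n))
    rw [Real.exp_neg] at h
    have hep := Real.exp_pos (L/n)
    have h2 : (1 - L/n) * Real.exp (L/n) ≤ 1 := by
      have h3 := mul_le_mul_of_nonneg_right h hep.le
      rw [inv_mul_cancel₀ hep.ne'] at h3
      nlinarith [h3]
    rw [le_div_iff₀ hnL]
    have h4 : (n:ℝ) * ((1 - L/n) * Real.exp (L/n)) = ((n:ℝ) - L) * Real.exp (L/n) := by
      field_simp
    have h5 := mul_le_mul_of_nonneg_left h2 hn0.le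
    rw [h4, mul_one] at h5
    linarith
  have hTub : T n ≤ n + n*L/((n:ℝ)-L) := by
    rw [hTn]
    have h2 := mul_le_mul_of_nonneg_left hexp_ub hn0.le
    have heq : (n:ℝ) * ((n:ℝ)/((n:ℝ)-L)) = n + n*L/((n:ℝ)-L) := by
      field_simp; ring
    linarith [heq ▸ h2]
  have hBub : (n:ℝ)*L/((n:ℝ)-L) + 1 ≤ L + 3/2 := by
    have h2 : (n:ℝ)*L/((n:ℝ)-L) ≤ L + 1/2 := by
      rw [div_le_iff₀ hnL]
      nlinarith [key]
    linarith
  have hσub : (σ n : ℝ) ≤ (n:ℝ)*L/((n:ℝ)-L) + 1 := by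
    have hfl : (⌊T n⌋ : ℝ) ≤ T n := Int.floor_le _
    have hc : (σ n : ℝ) = (⌊T n⌋:ℝ) - n + 1 := by rw [σ]; push_cast; ring
    rw [hc]; linarith
  have hσR : (σ n:ℝ) ≤ L + 3/2 := le_trans hσub hBub
  have hsn : σ n < (n:ℤ) := by
    have h2 : (σ n : ℝ) < n := by nlinarith
    exact_mod_cast h2
  -- m := n − σ n
  have hmdef : ((n - (σ n).toNat : ℕ) : ℤ) = (n:ℤ) - σ n := by omega
  set m := n - (σ n).toNat with hm
  have hm1 : 1 ≤ m := by omega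
  have hmR : (m:ℝ) = (n:ℝ) - (σ n:ℝ) := by exact_mod_cast hmdef
  have hm0 : (0:ℝ) < m := by exact_mod_cast hm1
  have hBpos : (0:ℝ) ≤ (n:ℝ)*L/((n:ℝ)-L) + 1 := by
    have : (0:ℝ) ≤ (n:ℝ)*L/((n:ℝ)-L) := div_nonneg (by positivity) hnL.le
    linarith
  have hm2B : 2*((n:ℝ)*L/((n:ℝ)-L) + 1) ≤ (m:ℝ) := by
    have h3B : 3*((n:ℝ)*L/((n:ℝ)-L) + 1) ≤ (n:ℝ) := by
      nlinarith [hBub, key, hL35]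
    linarith [hmR, hσub]
  have hkey2 : (σ n:ℝ) * ((m:ℝ)+1) ≤ (L+2)*(m:ℝ) := by
    have p1 : (σ n:ℝ)*((m:ℝ)+1) ≤ ((n:ℝ)*L/((n:ℝ)-L)+1)*((m:ℝ)+1) :=
      mul_le_mul_of_nonneg_right hσub (by linarith)
    have p2 : ((n:ℝ)*L/((n:ℝ)-L)+1)*(m:ℝ) ≤ (L+3/2)*(m:ℝ) :=
      mul_le_mul_of_nonneg_right hBub hm0.le
    linarith [p1, p2, hm2B]
  -- log m lower bound
  have hlogm : L * m - Real.log m * m ≤ (σ n:ℝ) := by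
    have hmne : (m:ℝ) ≠ 0 := hm0.ne'
    have hpos : (0:ℝ) < (n:ℝ)/(m:ℝ) := by positivity
    have h := Real.log_le_sub_one_of_pos hpos
    rw [Real.log_div hn0.ne' hmne] at h
    have h2 := mul_le_mul_of_nonneg_right h hm0.le
    have h3 : ((n:ℝ)/(m:ℝ) - 1) * m = (σ n:ℝ) := by
      field_simp; linarith [hmR]
    rw [h3] at h2
    linarith [h2]
  have hsm : ((σ n:ℝ) - 2) * m ≤ Real.log m * m := by linarith [hkey2, hlogm]
  have hsm2 : (σ n:ℝ) - 2 ≤ Real.log m := le_of_mul_le_mul_right hsm hm0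
  -- T m ≥ n − 2
  have hTm : (n:ℝ) - 2 ≤ T m := by
    have hTme : T m = m * Real.exp (Real.log m / m) := T_exp m (by omega)
    have h := Real.add_one_le_exp (Real.log m / m)
    have h2 := mul_le_mul_of_nonneg_left h hm0.le
    have h3 : (m:ℝ) * (Real.log m / m) = Real.log m := by field_simp
    rw [mul_add, h3, mul_one] at h2
    rw [hTme]
    linarith [hmR, hsm2]
  have hfm : (n:ℤ) - 2 ≤ ⌊T m⌋ := Int.le_floor.mpr (by push_cast; linarith)
  refine ⟨hs2, hsn, ?_⟩
  have hσm : σ m = ⌊T m⌋ - (m:ℕ) + 1 := rfl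
  omega

/-- Corollary 3: for `T_n = n·n^(1/n)` and `n ≥ 3` one has `2 ≤ σ_n < n` and the segment
`σ_{n−σ_n}, …, σ_n` takes at most two values, i.e. `σ_n − σ_{n−σ_n} ≤ 1`. -/
theorem sigma_segment_two_values (n : ℕ) (hn : 3 ≤ n) :
    2 ≤ σ n ∧ σ n < (n : ℤ) ∧ σ n - σ (n - (σ n).toNat) ≤ 1 := by
  rcases lt_or_ge n 34 with h | h
  · interval_cases n
    · exact case_helper 3 4 (by norm_num) (by norm_num) (by norm_num) (by norm_num) (by norm_num) (by norm_num)
    · exact case_helper 4 5 (by norm_num) (by norm_num) (by norm_num) (by norm_num) (by norm_num) (by norm_num)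
    · exact case_helper 5 6 (by norm_num) (by norm_num) (by norm_num) (by norm_num) (by norm_num) (by norm_num)
    · exact case_helper 6 8 (by norm_num) (by norm_num) (by norm_num) (by norm_num) (by norm_num) (by norm_num)
    · exact case_helper 7 9 (by norm_num) (by norm_num) (by norm_num) (by norm_num) (by norm_num) (by norm_num)
    · exact case_helper 8 10 (by norm_num) (by norm_num) (by norm_num) (by norm_num) (by norm_num) (by norm_num)
    · exact case_helper 9 11 (by norm_num) (by norm_num) (by norm_num) (by norm_num) (by norm_num) (by norm_num)
    · exact case_helper 10 12 (by norm_num) (by norm_num) (by norm_num) (by norm_num) (by norm_num) (by norm_num)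
    · exact case_helper 11 13 (by norm_num) (by norm_num) (by norm_num) (by norm_num) (by norm_num) (by norm_num)
    · exact case_helper 12 14 (by norm_num) (by norm_num) (by norm_num) (by norm_num) (by norm_num) (by norm_num)
    · exact case_helper 13 15 (by norm_num) (by norm_num) (by norm_num) (by norm_num) (by norm_num) (by norm_num)
    · exact case_helper 14 16 (by norm_num) (by norm_num) (by norm_num) (by norm_num) (by norm_num) (by norm_num)
    · exact case_helper 15 17 (by norm_num) (by norm_num) (by norm_num) (by norm_num) (by norm_num) (by norm_num)
    · exact case_helper 16 19 (by norm_num) (by norm_num) (by norm_num) (by norm_num) (by norm_num) (by norm_num)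
    · exact case_helper 17 20 (by norm_num) (by norm_num) (by norm_num) (by norm_num) (by norm_num) (by norm_num)
    · exact case_helper 18 21 (by norm_num) (by norm_num) (by norm_num) (by norm_num) (by norm_num) (by norm_num)
    · exact case_helper 19 22 (by norm_num) (by norm_num) (by norm_num) (by norm_num) (by norm_num) (by norm_num)
    · exact case_helper 20 23 (by norm_num) (by norm_num) (by norm_num) (by norm_num) (by norm_num) (by norm_num)
    · exact case_helper 21 24 (by norm_num) (by norm_num) (by norm_num) (by norm_num) (by norm_num) (by norm_num)
    · exact case_helper 22 25 (by norm_num) (by norm_num) (by norm_num) (by norm_num) (by norm_num) (by norm_num)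
    · exact case_helper 23 26 (by norm_num) (by norm_num) (by norm_num) (by norm_num) (by norm_num) (by norm_num)
    · exact case_helper 24 27 (by norm_num) (by norm_num) (by norm_num) (by norm_num) (by norm_num) (by norm_num)
    · exact case_helper 25 28 (by norm_num) (by norm_num) (by norm_num) (by norm_num) (by norm_num) (by norm_num)
    · exact case_helper 26 29 (by norm_num) (by norm_num) (by norm_num) (by norm_num) (by norm_num) (by norm_num)
    · exact case_helper 27 30 (by norm_num) (by norm_num) (by norm_num) (by norm_num) (by norm_num) (by norm_num)
    · exact case_helper 28 31 (by norm_num) (by norm_num) (by norm_num) (by norm_num) (by norm_num) (by norm_num)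
    · exact case_helper 29 32 (by norm_num) (by norm_num) (by norm_num) (by norm_num) (by norm_num) (by norm_num)
    · exact case_helper 30 33 (by norm_num) (by norm_num) (by norm_num) (by norm_num) (by norm_num) (by norm_num)
    · exact case_helper 31 34 (by norm_num) (by norm_num) (by norm_num) (by norm_num) (by norm_num) (by norm_num)
    · exact case_helper 32 35 (by norm_num) (by norm_num) (by norm_num) (by norm_num) (by norm_num) (by norm_num)
    · exact case_helper 33 36 (by norm_num) (by norm_num) (by norm_num) (by norm_num) (by norm_num) (by norm_num)
  · exact tail_case n h
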